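/- arXiv:1407.5571 — 2 statements merged into one kernel-verified Lean document; each statement's English description precedes it below -/
import Mathlib

section
/- (Schmitt–Vogel) Let R be a commutative ring, P a finite subset of R, and P_0, P_1, …, P_u subsets of P such that: (SV1) P_0 ∪ P_1 ∪ … ∪ P_u = P; (SV2) #P_0 = 1; (SV3) for every integer ℓ > 0 and all p, p'' ∈ P_ℓ with p ≠ p'', there exist an integer ℓ' < ℓ and an element p' ∈ P_{ℓ'} such that p·p'' lies in the principal ideal (p'). Let I be the ideal of R generated by P and set q_ℓ = Σ_{p ∈ P_ℓ} p for ℓ = 0, 1, …, u. Then √((q_0, q_1, …, q_u)) = √I. -/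
/-- **Schmitt–Vogel lemma.** Let `P` be a finite subset of a commutative ring `R`
and `P₀, P₁, …, P_u` subsets of `P` with: (SV1) their union is `P`; (SV2) `#P₀ = 1`;
(SV3) for every `ℓ > 0` and `p ≠ p''` in `P_ℓ` there are `ℓ' < ℓ` and `p' ∈ P_{ℓ'}`
with `p * p'' ∈ (p')`. Then the sums `q_ℓ = Σ_{p ∈ P_ℓ} p` generate the ideal
generated by `P` up to radical. -/
theorem schmitt_vogel {R : Type*} [CommRing R] (P : Finset R) (u : ℕ)
    (Ps : Fin (u + 1) → Finset R)
    (hsub : ∀ ℓ, Ps ℓ ⊆ P)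
    (hcover : ∀ p ∈ P, ∃ ℓ, p ∈ Ps ℓ)
    (hP0 : (Ps 0).card = 1)
    (hSV3 : ∀ ℓ : Fin (u + 1), 0 < (ℓ : ℕ) →
      ∀ p ∈ Ps ℓ, ∀ p'' ∈ Ps ℓ, p ≠ p'' →
      ∃ ℓ' : Fin (u + 1), (ℓ' : ℕ) < (ℓ : ℕ) ∧
        ∃ p' ∈ Ps ℓ', p * p'' ∈ Ideal.span {p'}) :
    (Ideal.span (Set.range fun ℓ : Fin (u + 1) => ∑ p ∈ Ps ℓ, p)).radical =
      (Ideal.span (P : Set R)).radical := by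
  classical
  set J := Ideal.span (Set.range fun ℓ : Fin (u + 1) => ∑ p ∈ Ps ℓ, p) with hJ
  apply le_antisymm
  · apply Ideal.radical_mono
    rw [Ideal.span_le]
    rintro _ ⟨ℓ, rfl⟩
    exact Ideal.sum_mem _ fun p hp => Ideal.subset_span (hsub ℓ hp)
  · have key : ∀ n : ℕ, ∀ ℓ : Fin (u + 1), (ℓ : ℕ) ≤ n → ∀ p ∈ Ps ℓ, p ∈ J.radical := by
      intro n
      induction n with
      | zero =>
        intro ℓ hℓ p hp
        have hℓ0 : ℓ = 0 := Fin.ext (Nat.le_zero.mp hℓ)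
        subst hℓ0
        obtain ⟨p₀, hP0'⟩ := Finset.card_eq_one.mp hP0
        rw [hP0', Finset.mem_singleton] at hp
        subst hp
        have hq : (∑ p ∈ Ps 0, p) ∈ J := Ideal.subset_span ⟨0, rfl⟩
        rw [hP0', Finset.sum_singleton] at hq
        exact Ideal.le_radical hq
      | succ n ih =>
        intro ℓ hℓ p hp
        rcases Nat.lt_or_ge (ℓ : ℕ) (n + 1) with h | h
        · exact ih ℓ (Nat.lt_succ_iff.mp h) p hp
        · have hpos : 0 < (ℓ : ℕ) := by omega
          have hq : (∑ p' ∈ Ps ℓ, p') ∈ J := Ideal.subset_span ⟨ℓ, rfl⟩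
          have hsum : p * (∑ p' ∈ Ps ℓ, p') ∈ J := Ideal.mul_mem_left _ _ hq
          have hsplit : p * (∑ p' ∈ Ps ℓ, p') =
              p * p + ∑ p'' ∈ (Ps ℓ).erase p, p * p'' := by
            rw [Finset.mul_sum, ← Finset.add_sum_erase _ _ hp]
          have hrest : ∀ p'' ∈ (Ps ℓ).erase p, p * p'' ∈ J.radical := by
            intro p'' hp''
            obtain ⟨hne, hp''mem⟩ := Finset.mem_erase.mp hp''
            obtain ⟨ℓ', hlt, p', hp'mem, hspan⟩ :=
              hSV3 ℓ hpos p hp p'' hp''mem (Ne.symm hne)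
            obtain ⟨r, hr⟩ := Ideal.mem_span_singleton'.mp hspan
            rw [← hr]
            exact Ideal.mul_mem_left _ _ (ih ℓ' (by omega) p' hp'mem)
          have hsq : p * p ∈ J.radical := by
            have heq : p * p = p * (∑ p' ∈ Ps ℓ, p') -
                ∑ p'' ∈ (Ps ℓ).erase p, p * p'' := by
              rw [hsplit]; ring
            rw [heq]
            exact Ideal.sub_mem _ (Ideal.le_radical hsum) (Ideal.sum_mem _ hrest)
          exact Ideal.mem_radical_of_pow_mem (show p ^ 2 ∈ J.radical by rwa [pow_two])
    have hPle : Ideal.span (P : Set R) ≤ J.radical := by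
      rw [Ideal.span_le]
      intro p hp
      obtain ⟨ℓ, hℓ⟩ := hcover p hp
      exact key u ℓ (Nat.lt_succ_iff.mp ℓ.isLt) p hℓ
    calc (Ideal.span (P : Set R)).radical ≤ J.radical.radical :=
          Ideal.radical_mono hPle
      _ = J.radical := Ideal.radical_idem J
end

section
/- Let m ≥ 1 and let R = K[x_1,…,x_{3m+2}, y] be a polynomial ring over a field K. Let I = (y·x_1·x_{3m+2}, x_1 x_2, x_2 x_3, …, x_{3m+1} x_{3m+2}). Define q_0 = x_1 x_2, q_1 = x_2 x_3 + x_4 x_5, and for i = 1,…,m−1 set q_{2i} = x_{3i} x_{3i+1} + x_{3i+2} x_{3i+3} and q_{2i+1} = x_{3i+2} x_{3i+3} + x_{3i+4} x_{3i+5}; finally set q_{2m} = y·x_1·x_{3m+2} + x_{3m} x_{3m+1}. Then √((q_0, q_1, …, q_{2m})) = I. -/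
open MvPolynomial

noncomputable section

universe u

variable {K : Type u} [Field K]

/-- The variable `x_i` (with `1 ≤ i ≤ 3m+2`) of the polynomial ring
`K[x_1, …, x_{3m+2}, y]`. -/
def xv {K : Type u} [Field K] (m : ℕ) (i : ℕ) :
    MvPolynomial (Option (Fin (3 * m + 2))) K :=
  if h : 1 ≤ i ∧ i ≤ 3 * m + 2 then X (some ⟨i - 1, by omega⟩) else 1

/-- The variable `y` of the polynomial ring `K[x_1, …, x_{3m+2}, y]`. -/
def yv {K : Type u} [Field K] (m : ℕ) :
    MvPolynomial (Option (Fin (3 * m + 2))) K :=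
  X none

/-- Auxiliary: the variable index `some ⟨k, _⟩` (for `k < 3m+2`). -/
def vι (m k : ℕ) : Option (Fin (3 * m + 2)) :=
  if h : k < 3 * m + 2 then some ⟨k, h⟩ else none

lemma xv_eq (m a j : ℕ) (hj : j = a + 1) (ha : a < 3 * m + 2) :
    (xv m j : MvPolynomial (Option (Fin (3 * m + 2))) K) = X (vι m a) := by
  subst hj
  rw [xv, dif_pos ⟨by omega, by omega⟩, vι, dif_pos ha]
  congr 1

/-- Auxiliary: the edge `x_j x_{j+1}`. -/
def Ee {K : Type u} [Field K] (m j : ℕ) : MvPolynomial (Option (Fin (3 * m + 2))) K :=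
  xv m j * xv m (j + 1)

lemma prod_id1 (m j : ℕ) (h1 : 1 ≤ j) (h2 : j + 3 ≤ 3 * m + 2) :
    Ee (K := K) m j * Ee m (j + 2) = (xv m j * xv m (j + 3)) * Ee m (j + 1) := by
  unfold Ee
  rw [xv_eq m (j-1) j (by omega) (by omega), xv_eq m j (j+1) rfl (by omega),
      xv_eq m (j+1) (j+2) rfl (by omega), xv_eq m (j+2) (j+3) rfl (by omega)]
  ring

/-- A squarefree monomial ideal contains its own radical. -/
theorem radical_le_of_squarefree {σ : Type*} {K : Type u} [Field K] (S : Set (σ →₀ ℕ))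
    (hS : ∀ s ∈ S, ∀ i, s i ≤ 1) :
    (Ideal.span ((fun s => (monomial s) (1 : K)) '' S)).radical ≤
      Ideal.span ((fun s => (monomial s) (1 : K)) '' S) := by
  intro f hf
  by_contra hfn
  have hfn2 := hfn
  rw [mem_ideal_span_monomial_image] at hfn2
  push_neg at hfn2
  obtain ⟨d, hd, hds⟩ := hfn2
  classical
  set φ : MvPolynomial σ K →ₐ[K] MvPolynomial σ K :=
    aeval (fun i => if d i = 0 then 0 else X i) with hφdef
  have hgen : ∀ s ∈ S, φ ((monomial s) (1 : K)) = 0 := by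
    intro s hs
    obtain ⟨i0, hi0⟩ : ∃ i, d i < s i := by
      by_contra h
      push_neg at h
      exact hds s hs (Finsupp.le_def.mpr h)
    have hs1 : s i0 = 1 := le_antisymm (hS s hs i0) (by omega)
    have hd0 : d i0 = 0 := by have := hS s hs i0; omega
    have hmem : i0 ∈ s.support := Finsupp.mem_support_iff.mpr (by omega)
    rw [aeval_monomial, Finsupp.prod,
      Finset.prod_eq_zero hmem (by rw [if_pos hd0, hs1, pow_one]), mul_zero]
  have hker : Ideal.span ((fun s => (monomial s) (1 : K)) '' S) ≤ RingHom.ker φ := by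
    rw [Ideal.span_le]
    rintro g ⟨s, hs, rfl⟩
    exact hgen s hs
  obtain ⟨n, hn⟩ := hf
  rcases Nat.eq_zero_or_pos n with rfl | hn0
  · rw [pow_zero] at hn
    exact hfn ((Ideal.eq_top_iff_one _).mpr hn ▸ Submodule.mem_top)
  · have hφn : (φ f) ^ n = 0 := by
      rw [← map_pow]
      exact hker hn
    have hφ0 : φ f = 0 := pow_eq_zero_iff (Nat.pos_iff_ne_zero.mp hn0) |>.mp hφn
    have hterm : ∀ e : σ →₀ ℕ,
        coeff d (φ ((monomial e) (coeff e f))) = if e = d then coeff e f else 0 := by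
      intro e
      by_cases hsub : ∀ i ∈ e.support, d i ≠ 0
      · have heq : φ ((monomial e) (coeff e f)) = (monomial e) (coeff e f) := by
          rw [aeval_monomial, monomial_eq, ← algebraMap_eq]
          congr 1
          apply Finsupp.prod_congr
          intro i hi
          rw [if_neg (hsub i hi)]
        rw [heq, coeff_monomial]
      · push_neg at hsub
        obtain ⟨i0, hi0s, hi0d⟩ := hsub
        have h0 : φ ((monomial e) (coeff e f)) = 0 := by
          rw [aeval_monomial, Finsupp.prod,
            Finset.prod_eq_zero hi0s
              (by rw [if_pos hi0d]; exact zero_pow (Finsupp.mem_support_iff.mp hi0s)), mul_zero]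
        rw [h0, if_neg (by rintro rfl; exact (Finsupp.mem_support_iff.mp hi0s) hi0d)]
        simp
    have hcd : coeff d (φ f) = coeff d f := by
      conv_lhs => rw [f.as_sum]
      rw [map_sum, coeff_sum]
      simp_rw [hterm]
      rw [Finset.sum_ite_eq' f.support d (fun e => coeff e f), if_pos hd]
    rw [hφ0, coeff_zero] at hcd
    exact (MvPolynomial.mem_support_iff.mp hd) hcd.symm

/-- In `R = K[x_1, …, x_{3m+2}, y]` with `m ≥ 1`, the `2m+1` elements
`q_0 = x_1x_2`, `q_1 = x_2x_3 + x_4x_5`,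
`q_{2i} = x_{3i}x_{3i+1} + x_{3i+2}x_{3i+3}`,
`q_{2i+1} = x_{3i+2}x_{3i+3} + x_{3i+4}x_{3i+5}` (for `1 ≤ i ≤ m-1`), and
`q_{2m} = y·x_1·x_{3m+2} + x_{3m}x_{3m+1}` generate
`I = (y·x_1·x_{3m+2}, x_1x_2, x_2x_3, …, x_{3m+1}x_{3m+2})` up to radical. -/
theorem cycle_case3_radical_generation (m : ℕ) (hm : 1 ≤ m)
    (I : Ideal (MvPolynomial (Option (Fin (3 * m + 2))) K))
    (hI : I = Ideal.span
      (insert (yv m * xv m 1 * xv m (3 * m + 2))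
        {f | ∃ j : ℕ, 1 ≤ j ∧ j ≤ 3 * m + 1 ∧ f = xv m j * xv m (j + 1)}))
    (q : ℕ → MvPolynomial (Option (Fin (3 * m + 2))) K)
    (hq0 : q 0 = xv m 1 * xv m 2)
    (hq1 : q 1 = xv m 2 * xv m 3 + xv m 4 * xv m 5)
    (hqeven : ∀ i : ℕ, 1 ≤ i → i ≤ m - 1 →
      q (2 * i) = xv m (3 * i) * xv m (3 * i + 1) + xv m (3 * i + 2) * xv m (3 * i + 3))
    (hqodd : ∀ i : ℕ, 1 ≤ i → i ≤ m - 1 →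
      q (2 * i + 1) = xv m (3 * i + 2) * xv m (3 * i + 3) + xv m (3 * i + 4) * xv m (3 * i + 5))
    (hq2m : q (2 * m) = yv m * xv m 1 * xv m (3 * m + 2) + xv m (3 * m) * xv m (3 * m + 1)) :
    (Ideal.span (Set.range fun ℓ : Fin (2 * m + 1) => q ℓ)).radical = I := by
  classical
  set J : Ideal (MvPolynomial (Option (Fin (3 * m + 2))) K) :=
    Ideal.span (Set.range fun ℓ : Fin (2 * m + 1) => q ℓ) with hJ
  have hqmem : ∀ ℓ : ℕ, ℓ ≤ 2 * m → q ℓ ∈ J := fun ℓ h =>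
    Ideal.subset_span ⟨⟨ℓ, by omega⟩, rfl⟩
  -- Part 3 : all generators of I are in the radical of J
  have hE1J : Ee (K := K) m 1 ∈ J := by
    have h : Ee (K := K) m 1 = q 0 := by rw [hq0]; rfl
    rw [h]; exact hqmem 0 (by omega)
  -- descending chain: x2 * E (3i) ∈ rad J
  have hC2 : ∀ d : ℕ, ∀ i : ℕ, 1 ≤ i → i ≤ m → m - i ≤ d →
      xv m 2 * Ee (K := K) m (3 * i) ∈ J.radical := by
    intro d
    induction d with
    | zero =>
      intro i h1 h2 h3
      have him : i = m := by omega
      rw [him]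
      have key : xv m 2 * Ee (K := K) m (3 * m) =
          xv m 2 * q (2 * m) - (yv m * xv m (3 * m + 2)) * q 0 := by
        rw [hq2m, hq0]
        simp only [Ee]
        ring
      rw [key]
      exact Ideal.sub_mem _
        (Ideal.mul_mem_left _ _ (Ideal.le_radical (hqmem (2 * m) le_rfl)))
        (Ideal.mul_mem_left _ _ (Ideal.le_radical (hqmem 0 (by omega))))
    | succ d ih =>
      intro i h1 h2 h3
      by_cases hi : m - i ≤ d
      · exact ih i h1 h2 hi
      · have him : i < m := by omega
        have hnext : xv m 2 * Ee (K := K) m (3 * (i + 1)) ∈ J.radical :=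
          ih (i + 1) (by omega) (by omega) (by omega)
        have hnext' : xv m 2 * Ee (K := K) m (3 * i + 3) ∈ J.radical := by
          rwa [show 3 * (i + 1) = 3 * i + 3 from by omega] at hnext
        have key : (xv m 2 * Ee (K := K) m (3 * i + 2)) ^ 2 =
            (xv m 2 * Ee m (3 * i + 2)) * (xv m 2 * q (2 * i + 1))
              - (xv m (3 * i + 2) * xv m (3 * i + 5)) *
                  (xv m 2 * (xv m 2 * Ee m (3 * i + 3))) := by
          rw [hqodd i h1 (by omega)]
          simp only [Ee]
          ring
        have h32 : xv m 2 * Ee (K := K) m (3 * i + 2) ∈ J.radical := by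
          apply Ideal.mem_radical_of_pow_mem (m := 2)
          rw [key]
          exact Ideal.sub_mem _
            (Ideal.mul_mem_left _ _
              (Ideal.mul_mem_left _ _ (Ideal.le_radical (hqmem (2 * i + 1) (by omega)))))
            (Ideal.mul_mem_left _ _ (Ideal.mul_mem_left _ _ hnext'))
        have key2 : xv m 2 * Ee (K := K) m (3 * i) =
            xv m 2 * q (2 * i) - xv m 2 * Ee m (3 * i + 2) := by
          rw [hqeven i h1 (by omega)]
          simp only [Ee]
          ring
        rw [key2]
        exact Ideal.sub_mem _
          (Ideal.mul_mem_left _ _ (Ideal.le_radical (hqmem (2 * i) (by omega)))) h32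
  have hx2E3 : xv m 2 * Ee (K := K) m 3 ∈ J.radical := by
    have h := hC2 (m - 1) 1 le_rfl hm (by omega)
    rwa [show 3 * 1 = 3 from by norm_num] at h
  have hE2 : Ee (K := K) m 2 ∈ J.radical := by
    apply Ideal.mem_radical_of_pow_mem (m := 2)
    have key : (Ee (K := K) m 2) ^ 2 =
        Ee m 2 * q 1 - xv m 5 * (xv m 2 * Ee m 3) := by
      rw [hq1]
      simp only [Ee]
      ring
    rw [key]
    exact Ideal.sub_mem _
      (Ideal.mul_mem_left _ _ (Ideal.le_radical (hqmem 1 (by omega))))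
      (Ideal.mul_mem_left _ _ hx2E3)
  have hE4 : Ee (K := K) m 4 ∈ J.radical := by
    have key : Ee (K := K) m 4 = q 1 - Ee m 2 := by
      rw [hq1]; simp only [Ee]; ring
    rw [key]
    exact Ideal.sub_mem _ (Ideal.le_radical (hqmem 1 (by omega))) hE2
  -- ascending chain
  have hchain : ∀ i : ℕ, 1 ≤ i → i ≤ m - 1 →
      Ee (K := K) m (3 * i) ∈ J.radical ∧ Ee (K := K) m (3 * i + 2) ∈ J.radical ∧
        Ee (K := K) m (3 * i + 4) ∈ J.radical := by
    intro i
    induction i with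
    | zero => intro h; exact absurd h (by omega)
    | succ n ih =>
      intro h1 h2
      have hE31 : Ee (K := K) m (3 * (n + 1) + 1) ∈ J.radical := by
        rcases Nat.eq_zero_or_pos n with rfl | hn
        · rw [show 3 * (0 + 1) + 1 = 4 from by norm_num]
          exact hE4
        · have h := (ih hn (by omega)).2.2
          rwa [show 3 * n + 4 = 3 * (n + 1) + 1 from by omega] at h
      have key : (Ee (K := K) m (3 * (n + 1))) ^ 2 =
          Ee m (3 * (n + 1)) * q (2 * (n + 1))
            - (xv m (3 * (n + 1)) * xv m (3 * (n + 1) + 3)) * Ee m (3 * (n + 1) + 1) := by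
        rw [hqeven (n + 1) h1 h2]
        simp only [Ee]
        ring
      have hA : Ee (K := K) m (3 * (n + 1)) ∈ J.radical := by
        apply Ideal.mem_radical_of_pow_mem (m := 2)
        rw [key]
        exact Ideal.sub_mem _
          (Ideal.mul_mem_left _ _ (Ideal.le_radical (hqmem (2 * (n + 1)) (by omega))))
          (Ideal.mul_mem_left _ _ hE31)
      have hB : Ee (K := K) m (3 * (n + 1) + 2) ∈ J.radical := by
        have key2 : Ee (K := K) m (3 * (n + 1) + 2) = q (2 * (n + 1)) - Ee m (3 * (n + 1)) := by
          rw [hqeven (n + 1) h1 h2]; simp only [Ee]; ring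
        rw [key2]
        exact Ideal.sub_mem _ (Ideal.le_radical (hqmem _ (by omega))) hA
      have hCc : Ee (K := K) m (3 * (n + 1) + 4) ∈ J.radical := by
        have key2 : Ee (K := K) m (3 * (n + 1) + 4) =
            q (2 * (n + 1) + 1) - Ee m (3 * (n + 1) + 2) := by
          rw [hqodd (n + 1) h1 h2]; simp only [Ee]; ring
        rw [key2]
        exact Ideal.sub_mem _ (Ideal.le_radical (hqmem _ (by omega))) hB
      exact ⟨hA, hB, hCc⟩
  have hE3m1 : Ee (K := K) m (3 * m + 1) ∈ J.radical := by
    rcases eq_or_lt_of_le hm with h | h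
    · rw [show 3 * m + 1 = 4 from by omega]
      exact hE4
    · have h4 := (hchain (m - 1) (by omega) le_rfl).2.2
      rwa [show 3 * (m - 1) + 4 = 3 * m + 1 from by omega] at h4
  have hgrad : yv m * xv m 1 * xv m (3 * m + 2) ∈ J.radical := by
    apply Ideal.mem_radical_of_pow_mem (m := 2)
    have key : (yv m * xv m 1 * xv m (3 * m + 2)) ^ 2 =
        (yv m * xv m 1 * xv m (3 * m + 2)) * q (2 * m)
          - (yv m * xv m 1 * xv m (3 * m)) * Ee (K := K) m (3 * m + 1) := by
      rw [hq2m]; simp only [Ee]; ring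
    rw [key]
    exact Ideal.sub_mem _
      (Ideal.mul_mem_left _ _ (Ideal.le_radical (hqmem (2 * m) le_rfl)))
      (Ideal.mul_mem_left _ _ hE3m1)
  have hE3m : Ee (K := K) m (3 * m) ∈ J.radical := by
    have key : Ee (K := K) m (3 * m) = q (2 * m) - yv m * xv m 1 * xv m (3 * m + 2) := by
      rw [hq2m]; simp only [Ee]; ring
    rw [key]
    exact Ideal.sub_mem _ (Ideal.le_radical (hqmem _ le_rfl)) hgrad
  have hEall : ∀ j : ℕ, 1 ≤ j → j ≤ 3 * m + 1 → Ee (K := K) m j ∈ J.radical := by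
    intro j hj1 hj2
    by_cases e1 : j = 1
    · subst e1; exact Ideal.le_radical hE1J
    by_cases e2 : j = 2
    · subst e2; exact hE2
    by_cases e4 : j = 4
    · subst e4; exact hE4
    by_cases e3m : j = 3 * m
    · subst e3m; exact hE3m
    by_cases e3m1 : j = 3 * m + 1
    · subst e3m1; exact hE3m1
    rcases (show j % 3 = 0 ∨ j % 3 = 1 ∨ j % 3 = 2 from by omega) with h | h | h
    · rw [show j = 3 * (j / 3) from by omega]
      exact (hchain (j / 3) (by omega) (by omega)).1
    · rw [show j = 3 * ((j - 4) / 3) + 4 from by omega]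
      exact (hchain _ (by omega) (by omega)).2.2
    · rw [show j = 3 * ((j - 2) / 3) + 2 from by omega]
      exact (hchain _ (by omega) (by omega)).2.1
  have hIle : I ≤ J.radical := by
    rw [hI, Ideal.span_le]
    intro f hf
    rcases Set.mem_insert_iff.mp hf with rfl | ⟨j, hj1, hj2, rfl⟩
    · exact hgrad
    · exact hEall j hj1 hj2
  -- Part 2 : J ≤ I
  have hJle : J ≤ I := by
    rw [hJ, Ideal.span_le]
    rintro f ⟨ℓ, rfl⟩
    show q (ℓ : ℕ) ∈ I
    have hℓ : (ℓ : ℕ) ≤ 2 * m := by have := ℓ.isLt; omega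
    have gmem : (yv m * xv m 1 * xv m (3 * m + 2)) ∈ I := by
      rw [hI]; exact Ideal.subset_span (Set.mem_insert _ _)
    have emem : ∀ j : ℕ, 1 ≤ j → j ≤ 3 * m + 1 → xv m j * xv m (j + 1) ∈ I := by
      intro j h1 h2
      rw [hI]
      exact Ideal.subset_span (Set.mem_insert_of_mem _ ⟨j, h1, h2, rfl⟩)
    set n := (ℓ : ℕ) with hn
    by_cases hn0 : n = 0
    · rw [hn0, hq0]; exact emem 1 (by omega) (by omega)
    by_cases hn1 : n = 1
    · rw [hn1, hq1]
      exact Ideal.add_mem _ (emem 2 (by omega) (by omega)) (emem 4 (by omega) (by omega))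
    by_cases hn2m : n = 2 * m
    · rw [hn2m, hq2m]
      exact Ideal.add_mem _ gmem (emem (3 * m) (by omega) (by omega))
    rcases (show n % 2 = 0 ∨ n % 2 = 1 from by omega) with h | h
    · rw [show n = 2 * (n / 2) from by omega, hqeven (n / 2) (by omega) (by omega)]
      exact Ideal.add_mem _ (emem (3 * (n / 2)) (by omega) (by omega))
        (emem (3 * (n / 2) + 2) (by omega) (by omega))
    · rw [show n = 2 * (n / 2) + 1 from by omega, hqodd (n / 2) (by omega) (by omega)]
      exact Ideal.add_mem _ (emem (3 * (n / 2) + 2) (by omega) (by omega))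
        (emem (3 * (n / 2) + 4) (by omega) (by omega))
  -- Part 1 : I is a radical ideal
  have hvne : ∀ k : ℕ, k < 3 * m + 2 → vι m k ≠ none := by
    intro k hk
    rw [vι, dif_pos hk]
    simp
  have hvinj : ∀ a b : ℕ, a < 3 * m + 2 → b < 3 * m + 2 → vι m a = vι m b → a = b := by
    intro a b ha hb h
    rw [vι, dif_pos ha, vι, dif_pos hb] at h
    simpa using h
  have hmono_g : (monomial
      (Finsupp.single (none : Option (Fin (3 * m + 2))) 1 + Finsupp.single (vι m 0) 1 +
        Finsupp.single (vι m (3 * m + 1)) 1)) (1 : K) =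
      yv m * xv m 1 * xv m (3 * m + 2) := by
    rw [yv, xv_eq m 0 1 rfl (by omega), xv_eq m (3 * m + 1) (3 * m + 2) (by omega) (by omega)]
    rw [X, X, X, monomial_mul, monomial_mul]
    norm_num
  have hmono_e : ∀ j : ℕ, 1 ≤ j → j ≤ 3 * m + 1 →
      (monomial (Finsupp.single (vι m (j - 1)) 1 + Finsupp.single (vι m j) 1)) (1 : K) =
        xv m j * xv m (j + 1) := by
    intro j h1 h2
    rw [xv_eq m (j - 1) j (by omega) (by omega), xv_eq m j (j + 1) rfl (by omega)]
    rw [X, X, monomial_mul]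
    norm_num
  have hIS : I = Ideal.span ((fun s => (monomial s) (1 : K)) ''
      (insert
        (Finsupp.single (none : Option (Fin (3 * m + 2))) 1 + Finsupp.single (vι m 0) 1 +
          Finsupp.single (vι m (3 * m + 1)) 1)
        {t | ∃ j : ℕ, 1 ≤ j ∧ j ≤ 3 * m + 1 ∧
          t = Finsupp.single (vι m (j - 1)) 1 + Finsupp.single (vι m j) 1})) := by
    rw [hI, Set.image_insert_eq, hmono_g]
    congr 2
    ext f
    simp only [Set.mem_image, Set.mem_setOf_eq]
    constructor
    · rintro ⟨j, h1, h2, rfl⟩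
      exact ⟨_, ⟨j, h1, h2, rfl⟩, hmono_e j h1 h2⟩
    · rintro ⟨t, ⟨j, h1, h2, rfl⟩, rfl⟩
      exact ⟨j, h1, h2, hmono_e j h1 h2⟩
  have htriple : ∀ (a b c : Option (Fin (3 * m + 2))), a ≠ b → a ≠ c → b ≠ c →
      ∀ i, (Finsupp.single a 1 + Finsupp.single b 1 + Finsupp.single c 1 :
        Option (Fin (3 * m + 2)) →₀ ℕ) i ≤ 1 := by
    intro a b c hab hac hbc i
    simp only [Finsupp.add_apply, Finsupp.single_apply]
    by_cases h1 : a = i <;> by_cases h2 : b = i <;> by_cases h3 : c = i <;>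
      first
        | exact absurd (h1.trans h2.symm) hab
        | exact absurd (h1.trans h3.symm) hac
        | exact absurd (h2.trans h3.symm) hbc
        | simp [h1, h2, h3]
  have hpair : ∀ (a b : Option (Fin (3 * m + 2))), a ≠ b →
      ∀ i, (Finsupp.single a 1 + Finsupp.single b 1 :
        Option (Fin (3 * m + 2)) →₀ ℕ) i ≤ 1 := by
    intro a b hab i
    simp only [Finsupp.add_apply, Finsupp.single_apply]
    by_cases h1 : a = i <;> by_cases h2 : b = i <;>
      first
        | exact absurd (h1.trans h2.symm) hab
        | simp [h1, h2]
  have hIrad : I.radical ≤ I := by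
    rw [hIS]
    apply radical_le_of_squarefree
    intro s hs
    rcases Set.mem_insert_iff.mp hs with rfl | ⟨j, h1, h2, rfl⟩
    · exact htriple _ _ _
        (fun h => hvne 0 (by omega) h.symm)
        (fun h => hvne (3 * m + 1) (by omega) h.symm)
        (fun h => by have := hvinj 0 (3 * m + 1) (by omega) (by omega) h; omega)
    · exact hpair _ _
        (fun h => by have := hvinj (j - 1) j (by omega) (by omega) h; omega)
  refine le_antisymm ?_ hIle
  calc J.radical ≤ I.radical := Ideal.radical_mono hJle
    _ ≤ I := hIrad

end
end
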